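/- arXiv:1303.4670 — 4 statements merged into one kernel-verified Lean document; each statement's English description precedes it below -/
import Mathlib

section
/- Let L be an even lattice with discriminant group Z/2 generated by [v/2] where v ∈ L has (v,v) = -2, and let x be a generator of a rank-1 lattice (2) with (x,x) = 2. Then the index-2 overlattice L' of L ⊕ Zx generated by L, x and (x+v)/2 is even and unimodular, and every isometry g of L extends to an isometry ḡ of L' fixing x, via ḡ((x+v)/2) = (x + g(v))/2. -/
/-!
Put `u = v/2`. Every element of the glued lattice has the form `(l + b u, a + b/2)` with `l ∈ L`
and `a, b ∈ ℤ`, and in these coordinates the pairing of two elements is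
`B(l,l') + b' B(l,u) + b B(u,l') + 2aa' + ab' + a'b + bb' (B(u,u) + 1/2)`; since `B(u,u) = -1/2`
the last term vanishes, which gives integrality and evenness. A vector `(y, s)` pairing
integrally with the glued lattice has `y` in the dual of `L`, so `y ∈ L` or `y ∈ u + L`, and
its pairing with `(u, 1/2)` then forces `s ∈ ℤ` or `s ∈ 1/2 + ℤ` respectively. An isometry `g`
of `L` sends `u` into the dual of `L`, but not into `L` because `B(gu, gu) = -1/2`, so
`gu ≡ u` modulo `L` and `(g, id)` preserves the normal form.
-/

section Glue

variable {V : Type*} [AddCommGroup V] [Module ℚ V] (L : Submodule ℤ V) (u : V)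

def glue : Submodule ℤ (V × ℚ) :=
  Submodule.span ℤ
    (((fun l : V => (l, (0 : ℚ))) '' (L : Set V)) ∪ {((0 : V), (1 : ℚ)), (u, (1 / 2 : ℚ))})

variable {L u}

theorem mem_glue_iff {w : V × ℚ} :
    w ∈ glue L u ↔ ∃ l ∈ L, ∃ a b : ℤ, w = (l + (b : ℚ) • u, (a : ℚ) + (b : ℚ) / 2) := by
  have hL : Submodule.span ℤ ((fun l : V => (l, (0 : ℚ))) '' (L : Set V)) =
      L.map (LinearMap.inl ℤ V ℚ) := by
    change Submodule.span ℤ (LinearMap.inl ℤ V ℚ '' L) = _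
    rw [Submodule.span_image, Submodule.span_eq]
  rw [glue, Submodule.span_union, hL, Submodule.mem_sup]
  simp only [Submodule.mem_map, LinearMap.inl_apply, Submodule.mem_span_pair]
  constructor
  · rintro ⟨_, ⟨l, hl, rfl⟩, _, ⟨a, b, rfl⟩, rfl⟩
    exact ⟨l, hl, a, b, by simp [Int.cast_smul_eq_zsmul, div_eq_mul_inv]⟩
  · rintro ⟨l, hl, a, b, rfl⟩
    exact ⟨_, ⟨l, hl, rfl⟩, _, ⟨a, b, rfl⟩, by simp [Int.cast_smul_eq_zsmul, div_eq_mul_inv]⟩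

theorem mk_mem_glue (u : V) {l : V} (hl : l ∈ L) (a b : ℤ) :
    (l + (b : ℚ) • u, (a : ℚ) + (b : ℚ) / 2) ∈ glue L u :=
  mem_glue_iff.2 ⟨l, hl, a, b, rfl⟩

theorem map_mem_glue (g : V →ₗ[ℚ] V) (hgL : ∀ x ∈ L, g x ∈ L)
    (hgu : g u - u ∈ L) {w : V × ℚ} (hw : w ∈ glue L u) : (g w.1, w.2) ∈ glue L u := by
  obtain ⟨l, hl, a, b, rfl⟩ := mem_glue_iff.1 hw
  convert mk_mem_glue u (L.add_mem (hgL l hl) (L.smul_mem b hgu)) a b using 2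
  rw [map_add, map_smul, ← Int.cast_smul_eq_zsmul ℚ, smul_sub]
  abel

def prodForm (B : LinearMap.BilinForm ℚ V) (p q : V × ℚ) : ℚ :=
  B p.1 q.1 + 2 * p.2 * q.2

variable {B : LinearMap.BilinForm ℚ V}

theorem prodForm_mk (l l' : V) (a b a' b' : ℤ) :
    prodForm B (l + (b : ℚ) • u, (a : ℚ) + (b : ℚ) / 2)
        (l' + (b' : ℚ) • u, (a' : ℚ) + (b' : ℚ) / 2) =
      B l l' + b' * B l u + b * B u l' + (2 * a * a' + a * b' + a' * b : ℤ)
        + b * b' * (B u u + 1 / 2) := by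
  simp only [prodForm, map_add, map_smul, LinearMap.add_apply, LinearMap.smul_apply, smul_eq_mul]
  push_cast
  ring

theorem prodForm_int_of_mem_glue (hsymm : ∀ x y : V, B x y = B y x) (hu : B u u = -1 / 2)
    (hudual : ∀ y ∈ L, ∃ n : ℤ, B u y = n) (hint : ∀ x ∈ L, ∀ y ∈ L, ∃ n : ℤ, B x y = n)
    {w w' : V × ℚ} (hw : w ∈ glue L u) (hw' : w' ∈ glue L u) : ∃ n : ℤ, prodForm B w w' = n := by
  obtain ⟨l, hl, a, b, rfl⟩ := mem_glue_iff.1 hw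
  obtain ⟨l', hl', a', b', rfl⟩ := mem_glue_iff.1 hw'
  obtain ⟨n₁, h₁⟩ := hint l hl l' hl'
  obtain ⟨n₂, h₂⟩ := hudual l hl
  obtain ⟨n₃, h₃⟩ := hudual l' hl'
  refine ⟨n₁ + b' * n₂ + b * n₃ + (2 * a * a' + a * b' + a' * b), ?_⟩
  rw [prodForm_mk, hsymm l u, h₁, h₂, h₃, hu]
  push_cast
  ring

theorem prodForm_self_even_of_mem_glue (hsymm : ∀ x y : V, B x y = B y x) (hu : B u u = -1 / 2)
    (hudual : ∀ y ∈ L, ∃ n : ℤ, B u y = n) (heven : ∀ x ∈ L, ∃ n : ℤ, B x x = 2 * n)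
    {w : V × ℚ} (hw : w ∈ glue L u) : ∃ n : ℤ, prodForm B w w = 2 * n := by
  obtain ⟨l, hl, a, b, rfl⟩ := mem_glue_iff.1 hw
  obtain ⟨m, hm⟩ := heven l hl
  obtain ⟨n, hn⟩ := hudual l hl
  refine ⟨m + b * n + a * a + a * b, ?_⟩
  rw [prodForm_mk, hsymm l u, hm, hn, hu]
  push_cast
  ring

theorem mem_glue_of_prodForm_int (hsymm : ∀ x y : V, B x y = B y x) (hu : B u u = -1 / 2)
    (hudual : ∀ y ∈ L, ∃ n : ℤ, B u y = n)
    (hgen : ∀ x : V, (∀ y ∈ L, ∃ n : ℤ, B x y = n) → x ∈ L ∨ x - u ∈ L)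
    {w : V × ℚ} (hw : ∀ w' ∈ glue L u, ∃ n : ℤ, prodForm B w w' = n) : w ∈ glue L u := by
  obtain ⟨y, s⟩ := w
  have hy : ∀ l ∈ L, ∃ n : ℤ, B y l = n := fun l hl => by
    obtain ⟨n, hn⟩ := hw _ (by simpa using mk_mem_glue u hl 0 0)
    exact ⟨n, by simpa [prodForm] using hn⟩
  obtain ⟨m, hm⟩ := hw _ (by simpa using mk_mem_glue u L.zero_mem 0 1)
  simp only [prodForm] at hm
  rcases hgen y hy with hyL | hyL
  · obtain ⟨n, hn⟩ := hudual y hyL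
    have hs : s = (m - n : ℤ) := by
      rw [hsymm] at hn
      push_cast
      linarith
    simpa [hs] using mk_mem_glue u hyL (m - n) 0
  · obtain ⟨n, hn⟩ := hudual (y - u) hyL
    have hs : s = (m - n : ℤ) + 1 / 2 := by
      rw [hsymm, map_sub, LinearMap.sub_apply, hu] at hn
      push_cast
      linarith
    simpa [hs] using mk_mem_glue u hyL (m - n) 1

theorem sub_mem_of_isometry (hu : B u u = -1 / 2) (hudual : ∀ y ∈ L, ∃ n : ℤ, B u y = n)
    (hint : ∀ x ∈ L, ∀ y ∈ L, ∃ n : ℤ, B x y = n)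
    (hgen : ∀ x : V, (∀ y ∈ L, ∃ n : ℤ, B x y = n) → x ∈ L ∨ x - u ∈ L)
    (g : V ≃ₗ[ℚ] V) (hiso : ∀ x y : V, B (g x) (g y) = B x y) (hgL' : ∀ x ∈ L, g.symm x ∈ L) :
    g u - u ∈ L := by
  have hdual : ∀ y ∈ L, ∃ n : ℤ, B (g u) y = n := fun y hy => by
    simpa [← hiso u (g.symm y)] using hudual _ (hgL' y hy)
  refine (hgen _ hdual).resolve_left fun hgu => ?_
  obtain ⟨n, hn⟩ := hint _ hgu _ hgu
  rw [hiso, hu] at hn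
  have : (2 * n + 1 : ℤ) = 0 := by exact_mod_cast (by linarith : (2 * n + 1 : ℚ) = 0)
  omega

end Glue

theorem stmt_9_general {V : Type*} [AddCommGroup V] [Module ℚ V]
    (B : LinearMap.BilinForm ℚ V) (hsymm : ∀ x y : V, B x y = B y x)
    (L : Submodule ℤ V)
    (hint : ∀ x ∈ L, ∀ y ∈ L, ∃ n : ℤ, B x y = (n : ℚ))
    (heven : ∀ x ∈ L, ∃ n : ℤ, B x x = 2 * (n : ℚ))
    (v : V) (hv2 : B v v = -2)
    (hvdual : ∀ y ∈ L, ∃ n : ℤ, B ((1 / 2 : ℚ) • v) y = (n : ℚ))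
    (hgen : ∀ x : V, (∀ y ∈ L, ∃ n : ℤ, B x y = (n : ℚ)) →
      (x ∈ L ∨ x - (1 / 2 : ℚ) • v ∈ L))
    (Bw : (V × ℚ) → (V × ℚ) → ℚ)
    (hBw : ∀ p q : V × ℚ, Bw p q = B p.1 q.1 + 2 * p.2 * q.2)
    (L' : Submodule ℤ (V × ℚ))
    (hL' : L' = Submodule.span ℤ
      (((fun l : V => (l, (0 : ℚ))) '' (L : Set V)) ∪
        {((0 : V), (1 : ℚ)), ((1 / 2 : ℚ) • v, (1 / 2 : ℚ))}))
    (g : V ≃ₗ[ℚ] V) (hiso : ∀ x y : V, B (g x) (g y) = B x y)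
    (hgL : ∀ x ∈ L, g x ∈ L) (hgL' : ∀ x ∈ L, g.symm x ∈ L)
    (gbar : (V × ℚ) ≃ₗ[ℚ] (V × ℚ))
    (hgbar : ∀ p : V × ℚ, gbar p = (g p.1, p.2)) :
    (∀ w ∈ L', ∀ u ∈ L', ∃ n : ℤ, Bw w u = (n : ℚ)) ∧
    (∀ w ∈ L', ∃ n : ℤ, Bw w w = 2 * (n : ℚ)) ∧
    (∀ w : V × ℚ, (∀ u ∈ L', ∃ n : ℤ, Bw w u = (n : ℚ)) → w ∈ L') ∧
    (∀ p q : V × ℚ, Bw (gbar p) (gbar q) = Bw p q) ∧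
    (∀ w ∈ L', gbar w ∈ L') ∧
    gbar ((0 : V), (1 : ℚ)) = ((0 : V), (1 : ℚ)) ∧
    gbar ((1 / 2 : ℚ) • v, (1 / 2 : ℚ)) = ((1 / 2 : ℚ) • g v, (1 / 2 : ℚ)) := by
  obtain rfl : Bw = prodForm B := funext₂ hBw
  obtain rfl : L' = glue L ((1 / 2 : ℚ) • v) := hL'
  have hu : B ((1 / 2 : ℚ) • v) ((1 / 2 : ℚ) • v) = -1 / 2 := by
    simp only [map_smul, LinearMap.smul_apply, smul_eq_mul, hv2]
    norm_num
  refine ⟨fun w hw w' hw' => prodForm_int_of_mem_glue hsymm hu hvdual hint hw hw',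
    fun w hw => prodForm_self_even_of_mem_glue hsymm hu hvdual heven hw,
    fun w hw => mem_glue_of_prodForm_int hsymm hu hvdual hgen hw, ?_, ?_, ?_, ?_⟩
  · simp [hgbar, prodForm, hiso]
  · intro w hw
    rw [hgbar]
    exact map_mem_glue g.toLinearMap hgL (sub_mem_of_isometry hu hvdual hint hgen g hiso hgL') hw
  · simp [hgbar]
  · simp [hgbar]

/-- Let `L` be an even lattice (full in `V = L ⊗ ℚ`, with nondegenerate symmetric
form `B`) with discriminant group `ℤ/2` generated by `[v/2]`, where `v ∈ L` has
`(v,v) = -2` and `v/2 ∉ L`, and let `x` generate a rank-1 lattice `(2)` with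
`(x,x) = 2`. In the ambient space `W = V × ℚ` with form
`Bw((u,s),(u',s')) = B(u,u') + 2ss'` (so `x = (0,1)`), the index-2 overlattice
`L'` of `L ⊕ ℤx` generated by `L`, `x` and `(x+v)/2 = (v/2, 1/2)` is even,
integral and unimodular, and every isometry `g` of `L` extends to the isometry
`ḡ : (u,s) ↦ (g u, s)` of `L'` fixing `x`, with `ḡ((x+v)/2) = (x + g(v))/2`. -/
theorem stmt_9 {V : Type*} [AddCommGroup V] [Module ℚ V]
    (B : LinearMap.BilinForm ℚ V) (hsymm : ∀ x y : V, B x y = B y x)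
    (hnd : ∀ x : V, (∀ y : V, B x y = 0) → x = 0)
    (L : Submodule ℤ V)
    (hspan : Submodule.span ℚ (L : Set V) = ⊤)
    (hint : ∀ x ∈ L, ∀ y ∈ L, ∃ n : ℤ, B x y = (n : ℚ))
    (heven : ∀ x ∈ L, ∃ n : ℤ, B x x = 2 * (n : ℚ))
    (v : V) (hv : v ∈ L) (hv2 : B v v = -2)
    (hvdual : ∀ y ∈ L, ∃ n : ℤ, B ((1 / 2 : ℚ) • v) y = (n : ℚ))
    (hvhalf : (1 / 2 : ℚ) • v ∉ L)
    (hgen : ∀ x : V, (∀ y ∈ L, ∃ n : ℤ, B x y = (n : ℚ)) →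
      (x ∈ L ∨ x - (1 / 2 : ℚ) • v ∈ L))
    (Bw : (V × ℚ) → (V × ℚ) → ℚ)
    (hBw : ∀ p q : V × ℚ, Bw p q = B p.1 q.1 + 2 * p.2 * q.2)
    (L' : Submodule ℤ (V × ℚ))
    (hL' : L' = Submodule.span ℤ
      (((fun l : V => (l, (0 : ℚ))) '' (L : Set V)) ∪
        {((0 : V), (1 : ℚ)), ((1 / 2 : ℚ) • v, (1 / 2 : ℚ))}))
    (g : V ≃ₗ[ℚ] V) (hiso : ∀ x y : V, B (g x) (g y) = B x y)
    (hgL : ∀ x ∈ L, g x ∈ L) (hgL' : ∀ x ∈ L, g.symm x ∈ L)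
    (gbar : (V × ℚ) ≃ₗ[ℚ] (V × ℚ))
    (hgbar : ∀ p : V × ℚ, gbar p = (g p.1, p.2)) :
    (∀ w ∈ L', ∀ u ∈ L', ∃ n : ℤ, Bw w u = (n : ℚ)) ∧
    (∀ w ∈ L', ∃ n : ℤ, Bw w w = 2 * (n : ℚ)) ∧
    (∀ w : V × ℚ, (∀ u ∈ L', ∃ n : ℤ, Bw w u = (n : ℚ)) → w ∈ L') ∧
    (∀ p q : V × ℚ, Bw (gbar p) (gbar q) = Bw p q) ∧
    (∀ w ∈ L', gbar w ∈ L') ∧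
    gbar ((0 : V), (1 : ℚ)) = ((0 : V), (1 : ℚ)) ∧
    gbar ((1 / 2 : ℚ) • v, (1 / 2 : ℚ)) = ((1 / 2 : ℚ) • g v, (1 / 2 : ℚ)) :=
  stmt_9_general B hsymm L hint heven v hv2 hvdual hgen Bw hBw L' hL' g hiso hgL hgL' gbar hgbar
end

section
/- A symplectic automorphism of prime order p on a Hyperkähler manifold of K3^[2]-type satisfies p ≤ 23; more precisely, since the co-invariant lattice S_φ is negative definite of rank at most 23 - 3 = 20 and of rank divisible by p - 1, one has p - 1 ≤ 20. -/
/-!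
If `φ` has order `p` and fixes no nonzero vector, then `(φ - 1)(1 + φ + ⋯ + φ^(p-1)) = φ^p - 1 = 0`
forces `1 + φ + ⋯ + φ^(p-1) = 0`, so `φ` is a root of the cyclotomic polynomial `Φ_p`. After
extending scalars to `ℚ`, where `Φ_p` is irreducible, `Φ_p` is the minimal polynomial of `φ` and
divides its characteristic polynomial; hence `p - 1 = deg Φ_p` is at most the rank, which is `≤ 20`.
-/

open Polynomial Module

theorem Module.End.geom_sum_eq_zero_of_pow_eq_one {R M : Type*} [Ring R] [AddCommGroup M]
    [Module R M] {f : End R M} {n : ℕ} (hf : f ^ n = 1) (hfix : ∀ v, f v = v → v = 0) :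
    ∑ i ∈ Finset.range n, f ^ i = 0 := by
  have h : (f - 1) * ∑ i ∈ Finset.range n, f ^ i = 0 := by rw [mul_geom_sum, hf, sub_self]
  ext v
  refine hfix _ (sub_eq_zero.mp ?_)
  simpa using LinearMap.congr_fun h v

theorem Module.End.aeval_cyclotomic_prime_eq_zero {R M : Type*} [CommRing R] [AddCommGroup M]
    [Module R M] {f : End R M} {p : ℕ} [Fact p.Prime] (hf : f ^ p = 1)
    (hfix : ∀ v, f v = v → v = 0) : aeval f (cyclotomic p R) = 0 := by
  simpa [cyclotomic_prime, map_sum] using geom_sum_eq_zero_of_pow_eq_one hf hfix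

theorem Module.End.natDegree_le_finrank_of_aeval_eq_zero {K V : Type*} [Field K] [AddCommGroup V]
    [Module K V] [FiniteDimensional K V] [Nontrivial V] {f : End K V} {q : K[X]}
    (hirr : Irreducible q) (hmonic : q.Monic) (hq : aeval f q = 0) : q.natDegree ≤ finrank K V := by
  rw [minpoly.eq_of_irreducible_of_monic hirr hq hmonic, ← LinearMap.charpoly_natDegree f]
  exact natDegree_le_of_dvd (LinearMap.minpoly_dvd_charpoly f) (LinearMap.charpoly_monic f).ne_zero

theorem Module.End.natDegree_le_finrank_of_aeval_eq_zero_of_irreducible_map {R K L : Type*}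
    [CommRing R] [StrongRankCondition R] [Field K] [Algebra R K] [AddCommGroup L] [Module R L]
    [Free R L] [Module.Finite R L] [Nontrivial L] {f : End R L} {q : R[X]}
    (hirr : Irreducible (q.map (algebraMap R K))) (hmonic : q.Monic) (hq : aeval f q = 0) :
    q.natDegree ≤ finrank R L := by
  have hK : aeval (f.baseChange K) (q.map (algebraMap R K)) = 0 := by
    rw [aeval_map_algebraMap]
    exact (aeval_algHom_apply (baseChangeHom R K L) f q).trans (by rw [hq, map_zero])
  rw [← hmonic.natDegree_map (algebraMap R K), ← finrank_baseChange (R := K) (S := R) (M' := L)]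
  exact natDegree_le_finrank_of_aeval_eq_zero hirr (hmonic.map _) hK

theorem stmt_12_general {S : Type*} [AddCommGroup S] [Module ℤ S]
    [Module.Free ℤ S] [Module.Finite ℤ S]
    (hrk : Module.finrank ℤ S ≤ 20) (hrk0 : Module.finrank ℤ S ≠ 0)
    (p : ℕ) (hp : p.Prime)
    (φ : S ≃ₗ[ℤ] S)
    (horder : φ ^ p = 1)
    (hfree : ∀ v : S, φ v = v → v = 0) :
    p - 1 ≤ 20 ∧ p ≤ 23 := by
  have : Fact p.Prime := ⟨hp⟩
  have : Nontrivial S := nontrivial_of_finrank_pos (Nat.pos_of_ne_zero hrk0)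
  have hpow : (φ : End ℤ S) ^ p = 1 := by
    ext v
    simpa [End.pow_apply, LinearEquiv.pow_apply] using LinearEquiv.congr_fun horder v
  have hle := End.natDegree_le_finrank_of_aeval_eq_zero_of_irreducible_map (K := ℚ)
    (by rw [map_cyclotomic]; exact cyclotomic.irreducible_rat hp.pos) (cyclotomic.monic p ℤ)
    (End.aeval_cyclotomic_prime_eq_zero hpow hfree)
  rw [natDegree_cyclotomic, Nat.totient_prime hp] at hle
  omega

/-- Let `S` stand for the co-invariant lattice `S_φ` of a symplectic automorphism
`φ` of prime order `p` on a Hyperkähler manifold of K3^[2]-type: `S` is negative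
definite of rank at most `23 - 3 = 20`, nonzero, and `φ` restricts to an isometry
of order `p` of `S` acting freely on its nonzero elements (so that `S` carries a
`ℤ[ω_p]`-structure and `p - 1` divides its rank). Then `p - 1 ≤ 20`, and in
particular `p ≤ 23`. -/
theorem stmt_12 {S : Type*} [AddCommGroup S] [Module ℤ S]
    [Module.Free ℤ S] [Module.Finite ℤ S]
    (B : LinearMap.BilinForm ℤ S)
    (hneg : ∀ v : S, v ≠ 0 → B v v < 0)
    (hrk : Module.finrank ℤ S ≤ 20) (hrk0 : Module.finrank ℤ S ≠ 0)
    (p : ℕ) (hp : p.Prime)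
    (φ : S ≃ₗ[ℤ] S) (hiso : ∀ x y : S, B (φ x) (φ y) = B x y)
    (horder : φ ^ p = 1) (hφ1 : φ ≠ 1)
    (hfree : ∀ v : S, φ v = v → v = 0) :
    p - 1 ≤ 20 ∧ p ≤ 23 :=
  stmt_12_general hrk hrk0 p hp φ horder hfree
end

section
/- Fixed point count for order-3 symplectic automorphisms on K3^[2]-type manifolds: if N is the number of isolated fixed points, K the number of fixed K3 surfaces, A = Σ∫_Z c₂(X)[Z] over all fixed surfaces, and a is the dimension of the ω-eigenspace on H^{1,1}, then the holomorphic Lefschetz equations 3 = N/9 - 10K/3 + A/6, 6a - 42 = -2N/9 - 70K/3 + 2A/3, and N/3 - 16K + A = 9a²/2 - 129a/2 + 234 have only the nonnegative integer solutions (N,K,a) ∈ {(27, 0, 6), (0, 0, 9), (6, 2, 5)} with the constraint a ≤ 9. -/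
/-- Fixed point count for order-3 symplectic automorphisms on K3^[2]-type
manifolds: if `N` is the number of isolated fixed points, `K` the number of fixed
K3 surfaces, `A = Σ∫_Z c₂(X)[Z]` over the fixed surfaces (a nonnegative
rational), and `a` the dimension of the `ω`-eigenspace on `H^{1,1}`, then the
holomorphic Lefschetz equations
`3 = N/9 - 10K/3 + A/6`,
`6a - 42 = -2N/9 - 70K/3 + 2A/3`, and
`N/3 - 16K + A = 9a²/2 - 129a/2 + 234`
have only the nonnegative integer solutions
`(N,K,a) ∈ {(27,0,6), (0,0,9), (6,2,5)}` (with the constraint `a ≤ 9`). -/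
theorem stmt_13 (N K a : ℕ) (A : ℚ) (hA : 0 ≤ A)
    (h1 : (3 : ℚ) = (N : ℚ) / 9 - 10 * (K : ℚ) / 3 + A / 6)
    (h2 : 6 * (a : ℚ) - 42 = -2 * (N : ℚ) / 9 - 70 * (K : ℚ) / 3 + 2 * A / 3)
    (h3 : (N : ℚ) / 3 - 16 * (K : ℚ) + A
      = 9 * (a : ℚ) ^ 2 / 2 - 129 * (a : ℚ) / 2 + 234) :
    (N = 27 ∧ K = 0 ∧ a = 6) ∨ (N = 0 ∧ K = 0 ∧ a = 9) ∨
      (N = 6 ∧ K = 2 ∧ a = 5) := by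
  have e1 : ((2*N + 18*a + 30*K : ℕ) : ℚ) = 162 := by push_cast; linarith
  have e2 : ((18*K + 135*a : ℕ) : ℚ) = ((9*a^2 + 486 : ℕ) : ℚ) := by push_cast; linarith
  have n1 : 2*N + 18*a + 30*K = 162 := by exact_mod_cast e1
  have n2 : 18*K + 135*a = 9*a^2 + 486 := by exact_mod_cast e2
  have ha : a ≤ 9 := by omega
  interval_cases a <;> omega
end

section
/- Let L = U³ ⊕ E₈(-1)² ⊕ (-2). Up to the action of O(L), there is exactly one O(L)-orbit of primitive vectors e ∈ L with e² = -2 and divisibility 2 (i.e., (e, L) = 2Z), and for such e one has e ⊕ e^⊥ = L, with e^⊥ ≅ U³ ⊕ E₈(-1)². -/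
/-- The Gram matrix of the (positive definite) root lattice `E₈`. -/
def E8Gram : Matrix (Fin 8) (Fin 8) ℤ :=
  !![2, 0, -1, 0, 0, 0, 0, 0;
     0, 2, 0, -1, 0, 0, 0, 0;
     -1, 0, 2, -1, 0, 0, 0, 0;
     0, -1, -1, 2, -1, 0, 0, 0;
     0, 0, 0, -1, 2, -1, 0, 0;
     0, 0, 0, 0, -1, 2, -1, 0;
     0, 0, 0, 0, 0, -1, 2, -1;
     0, 0, 0, 0, 0, 0, -1, 2]

/-- Index set for the lattice `L = U³ ⊕ E₈(-1)² ⊕ (-2)` of rank 23. -/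
abbrev IdxL := (Fin 3 × Fin 2) ⊕ ((Fin 2 × Fin 8) ⊕ Fin 1)

/-- Index set for the lattice `U³ ⊕ E₈(-1)²` of rank 22. -/
abbrev IdxM := (Fin 3 × Fin 2) ⊕ (Fin 2 × Fin 8)

/-- The bilinear form of `L = U³ ⊕ E₈(-1)² ⊕ (-2)` on `ℤ^23`. -/
def bL (x y : IdxL → ℤ) : ℤ :=
  (∑ u : Fin 3,
    (x (Sum.inl (u, 0)) * y (Sum.inl (u, 1)) +
      x (Sum.inl (u, 1)) * y (Sum.inl (u, 0))))
  - (∑ c : Fin 2, ∑ i : Fin 8, ∑ j : Fin 8,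
      E8Gram i j * x (Sum.inr (Sum.inl (c, i))) * y (Sum.inr (Sum.inl (c, j))))
  - 2 * x (Sum.inr (Sum.inr 0)) * y (Sum.inr (Sum.inr 0))

/-- The bilinear form of `U³ ⊕ E₈(-1)²` on `ℤ^22`. -/
def bM (x y : IdxM → ℤ) : ℤ :=
  (∑ u : Fin 3,
    (x (Sum.inl (u, 0)) * y (Sum.inl (u, 1)) +
      x (Sum.inl (u, 1)) * y (Sum.inl (u, 0))))
  - (∑ c : Fin 2, ∑ i : Fin 8, ∑ j : Fin 8,
      E8Gram i j * x (Sum.inr (c, i)) * y (Sum.inr (c, j)))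

/-!
Write `L = M ⊕ ℤv` with `M = U³ ⊕ E₈(-1)²` unimodular and `v² = -2`. As `M` is unimodular, a
vector of divisibility 2 is `e = 2m + cv` with `m ∈ M`, and `e² = -2` reads `2m² = c² - 1`.

Eichler transvections `y ↦ y + (f,y)x - ((x,y) + (x²/2)(f,y))f` (`f` isotropic, `x ⟂ f`) are
isometries. With `f = w ∈ M` isotropic and `x ∈ ℤv` they change `c` by any multiple of `2(w,m)`,
so `|c|` drops as soon as some isotropic `w` has `0 < 2(w,m)² ≤ m²`. Such a `w` exists: Eichler
transvections of `M = U ⊕ (U² ⊕ E₈(-1)²)` run the Euclidean algorithm on the coordinates of `m`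
and move it into `U`, where `m = Au + Bu'` and one of `u`, `u'` will do. When `c = ±1`, `m` is
isotropic and the transvection along `m` itself leads to `±v`. So `e` lies in the orbit of `v`,
and `e^⊥` is the image of `v^⊥ = M`.
-/

open LinearMap (BilinForm)

theorem Int.natAbs_emod_lt (a : ℤ) {b : ℤ} (hb : b ≠ 0) : (a % b).natAbs < b.natAbs := by
  have h₀ := Int.emod_nonneg a hb
  have h₁ := Int.emod_lt_abs a hb
  rw [Int.abs_eq_natAbs] at h₁
  omega

theorem Int.exists_sub_mul_ne_zero_natAbs_le (a ρ : ℤ) (hρ : ρ ≠ 0) :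
    ∃ t : ℤ, a - t * ρ ≠ 0 ∧ (a - t * ρ).natAbs ≤ ρ.natAbs := by
  by_cases hdvd : ρ ∣ a
  · obtain ⟨k, rfl⟩ := hdvd
    exact ⟨k - 1, by rw [show ρ * k - (k - 1) * ρ = ρ by ring]; exact ⟨hρ, le_rfl⟩⟩
  · refine ⟨a / ρ, ?_, ?_⟩ <;> rw [mul_comm, ← Int.emod_def]
    · rwa [Ne, ← Int.dvd_iff_emod_eq_zero]
    · exact (Int.natAbs_emod_lt a hρ).le

theorem Int.exists_two_mul_natAbs_add_mul_le (c b : ℤ) (hb : b ≠ 0) :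
    ∃ t : ℤ, 2 * (c + t * b).natAbs ≤ b.natAbs := by
  have hm : 0 < b.natAbs := Int.natAbs_pos.mpr hb
  obtain ⟨k, hk⟩ : (b.natAbs : ℤ) ∣ c.bmod b.natAbs - c :=
    Int.ModEq.dvd Int.bmod_emod.symm
  have h1 := Int.le_bmod (x := c) hm
  have h2 := Int.bmod_lt (x := c) hm
  suffices ∃ t, c + t * b = c.bmod b.natAbs by
    obtain ⟨t, ht⟩ := this
    exact ⟨t, by omega⟩
  rcases Int.natAbs_eq b with hb' | hb'
  · exact ⟨k, by linear_combination -hk + k * hb'⟩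
  · exact ⟨-k, by linear_combination -hk - k * hb'⟩

theorem sq_le_mul_of_abs_le {α : Type*} [Ring α] [LinearOrder α] [IsStrictOrderedRing α]
    {a b : α} (h : |b| ≤ |a|) (hab : 0 < a * b) : b ^ 2 ≤ a * b :=
  calc b ^ 2 = |b| * |b| := by rw [sq, abs_mul_abs_self]
    _ ≤ |a| * |b| := mul_le_mul_of_nonneg_right h (abs_nonneg b)
    _ = a * b := by rw [← abs_mul, abs_of_pos hab]

/-! ### Eichler transvections -/

namespace LinearMap.BilinForm

variable {R V : Type*} [CommRing R] [AddCommGroup V] [Module R V]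

def eichlerTransvection (B : BilinForm R V) (f x : V) (s : R) : V →ₗ[R] V :=
  LinearMap.id + (B f).smulRight x - (B x + s • B f).smulRight f

theorem eichlerTransvection_apply (B : BilinForm R V) (f x : V) (s : R) (y : V) :
    B.eichlerTransvection f x s y = y + B f y • x - (B x y + s * B f y) • f := by
  simp [eichlerTransvection]

variable {B : BilinForm R V} {f x : V} {s : R}

theorem eichlerTransvection_neg_apply_eichlerTransvection (hB : B.IsSymm) (hf : B f f = 0)
    (hfx : B f x = 0) (hx : B x x = 2 * s) (y : V) :
    B.eichlerTransvection f (-x) s (B.eichlerTransvection f x s y) = y := by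
  have hxf : B x f = 0 := by rw [hB.eq, hfx]
  simp only [eichlerTransvection_apply, map_add, map_sub, map_smul, map_neg,
    LinearMap.neg_apply, hf, hfx, hxf, hx]
  module

theorem eichlerTransvection_isometry (hB : B.IsSymm) (hf : B f f = 0) (hfx : B f x = 0)
    (hx : B x x = 2 * s) (y z : V) :
    B (B.eichlerTransvection f x s y) (B.eichlerTransvection f x s z) = B y z := by
  have hxf : B x f = 0 := by rw [hB.eq, hfx]
  simp only [eichlerTransvection_apply, map_add, map_sub, map_smul,
    LinearMap.add_apply, LinearMap.sub_apply, LinearMap.smul_apply,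
    hf, hfx, hxf, hx, smul_eq_mul, hB.eq y x, hB.eq y f, hB.eq x z]
  ring

def eichlerEquiv (hB : B.IsSymm) (hf : B f f = 0) (hfx : B f x = 0) (hx : B x x = 2 * s) :
    V ≃ₗ[R] V where
  __ := B.eichlerTransvection f x s
  invFun := B.eichlerTransvection f (-x) s
  left_inv := eichlerTransvection_neg_apply_eichlerTransvection hB hf hfx hx
  right_inv y := by
    simpa using eichlerTransvection_neg_apply_eichlerTransvection (x := -x) hB hf
      (by simp [hfx]) (by simp [hx]) y

def SameOrbit (B : BilinForm R V) (x y : V) : Prop :=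
  ∃ g : V ≃ₗ[R] V, (∀ a b, B (g a) (g b) = B a b) ∧ g x = y

namespace SameOrbit

theorem refl (x : V) : B.SameOrbit x x := ⟨LinearEquiv.refl R V, fun _ _ => rfl, rfl⟩

theorem symm {x y : V} (h : B.SameOrbit x y) : B.SameOrbit y x := by
  obtain ⟨g, hg, rfl⟩ := h
  exact ⟨g.symm, fun a b => by simpa using (hg (g.symm a) (g.symm b)).symm, g.symm_apply_apply x⟩

theorem trans {x y z : V} (h₁ : B.SameOrbit x y) (h₂ : B.SameOrbit y z) : B.SameOrbit x z := by
  obtain ⟨g₁, hg₁, rfl⟩ := h₁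
  obtain ⟨g₂, hg₂, rfl⟩ := h₂
  exact ⟨g₁.trans g₂, fun a b => by simp [hg₁, hg₂], rfl⟩

theorem apply_self_eq {x y : V} (h : B.SameOrbit x y) : B y y = B x x := by
  obtain ⟨g, hg, rfl⟩ := h
  exact hg x x

theorem exists_apply_eq {x y : V} (h : B.SameOrbit x y) (w : V) :
    ∃ w', B w' w' = B w w ∧ B w' x = B w y := by
  obtain ⟨g, hg, rfl⟩ := h
  exact ⟨g.symm w, by simpa using (hg (g.symm w) (g.symm w)).symm,
    by simpa using (hg (g.symm w) x).symm⟩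

end SameOrbit

theorem sameOrbit_neg (x : V) : B.SameOrbit x (-x) :=
  ⟨LinearEquiv.neg R, fun a b => by simp, rfl⟩

theorem sameOrbit_eichlerTransvection (hB : B.IsSymm) (hf : B f f = 0) (hfx : B f x = 0)
    (hx : B x x = 2 * s) (y : V) : B.SameOrbit y (B.eichlerTransvection f x s y) :=
  ⟨eichlerEquiv hB hf hfx hx, eichlerTransvection_isometry hB hf hfx hx, rfl⟩

end LinearMap.BilinForm

/-! ### The lattice `M = U³ ⊕ E₈(-1)²` -/

abbrev VM := IdxM → ℤ

theorem E8Gram_comm (i j : Fin 8) : E8Gram i j = E8Gram j i := by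
  fin_cases i <;> fin_cases j <;> rfl

theorem bM_add_left (x y z : VM) : bM (x + y) z = bM x z + bM y z := by
  simp only [bM, Pi.add_apply, add_mul, mul_add, Finset.sum_add_distrib]
  ring

theorem bM_smul_left (c : ℤ) (x y : VM) : bM (c • x) y = c * bM x y := by
  simp only [bM, Pi.smul_apply, smul_eq_mul, mul_sub, Finset.mul_sum]
  ring_nf

theorem bM_comm (x y : VM) : bM x y = bM y x := by
  simp only [bM]
  congr 1
  · exact Finset.sum_congr rfl fun _ _ => by ring
  · refine Finset.sum_congr rfl fun _ _ => ?_
    rw [Finset.sum_comm]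
    exact Finset.sum_congr rfl fun i _ => Finset.sum_congr rfl fun j _ => by
      rw [E8Gram_comm i j]; ring

@[simp]
theorem bM_zero_left (x : VM) : bM 0 x = 0 := by
  simpa using bM_smul_left 0 0 x

theorem bM_add_right (x y z : VM) : bM x (y + z) = bM x y + bM x z := by
  rw [bM_comm, bM_add_left, bM_comm y, bM_comm z]

theorem bM_smul_right (c : ℤ) (x y : VM) : bM x (c • y) = c * bM x y := by
  rw [bM_comm, bM_smul_left, bM_comm]

theorem E8Gram_quadratic_eq (f : Fin 8 → ℤ) :
    ∑ i, ∑ j, E8Gram i j * f i * f j =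
      2 * (∑ i, f i ^ 2 - f 0 * f 2 - f 1 * f 3 - f 2 * f 3 - f 3 * f 4 - f 4 * f 5
        - f 5 * f 6 - f 6 * f 7) := by
  simp only [E8Gram, Fin.sum_univ_eight, Matrix.of_apply, Matrix.cons_val', Matrix.cons_val_fin_one,
    Matrix.cons_val_zero, Matrix.cons_val_one, Matrix.cons_val]
  ring

theorem two_dvd_bM_self (x : VM) : 2 ∣ bM x x := by
  simp only [bM, E8Gram_quadratic_eq (fun i => x (Sum.inr (_, i)))]
  refine dvd_sub (Finset.dvd_sum fun u _ => ⟨x (Sum.inl (u, 0)) * x (Sum.inl (u, 1)), by ring⟩)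
    (Finset.dvd_sum fun c _ => dvd_mul_right _ _)

abbrev hypVec (p : Fin 3) (q : Fin 2) : VM := Pi.single (Sum.inl (p, q)) 1

theorem bM_hypVec (p : Fin 3) (q : Fin 2) (m : VM) :
    bM (hypVec p q) m = m (Sum.inl (p, q.rev)) := by
  fin_cases p <;> fin_cases q <;> simp [bM, Pi.single_apply]

theorem bM_hypVec_self (p : Fin 3) (q : Fin 2) :
    bM (hypVec p q) (hypVec p q) = 0 := by
  rw [bM_hypVec]
  fin_cases q <;> simp

theorem bM_hypVec_right (p : Fin 3) (q : Fin 2) (m : VM) :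
    bM m (hypVec p q) = m (Sum.inl (p, q.rev)) := by
  rw [bM_comm, bM_hypVec]

def E8GramInv : Matrix (Fin 8) (Fin 8) ℤ :=
  !![4, 5, 7, 10, 8, 6, 4, 2;
     5, 8, 10, 15, 12, 9, 6, 3;
     7, 10, 14, 20, 16, 12, 8, 4;
     10, 15, 20, 30, 24, 18, 12, 6;
     8, 12, 16, 24, 20, 15, 10, 5;
     6, 9, 12, 18, 15, 12, 8, 4;
     4, 6, 8, 12, 10, 8, 6, 3;
     2, 3, 4, 6, 5, 4, 3, 2]

theorem E8GramInv_mul_E8Gram : E8GramInv * E8Gram = 1 := by decide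

def dualE8 (c : Fin 2) (k : Fin 8) : VM :=
  Sum.elim 0 fun q => if q.1 = c then -E8GramInv k q.2 else 0

@[simp]
theorem dualE8_inl (c : Fin 2) (k : Fin 8) (p : Fin 3 × Fin 2) : dualE8 c k (Sum.inl p) = 0 := rfl

theorem bM_dualE8 (c : Fin 2) (k : Fin 8) (m : VM) :
    bM (dualE8 c k) m = m (Sum.inr (c, k)) := by
  have hcol : ∀ j, ∑ i, E8Gram i j * E8GramInv k i * m (Sum.inr (c, j)) =
      (E8GramInv * E8Gram) k j * m (Sum.inr (c, j)) := fun j => by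
    rw [Matrix.mul_apply, Finset.sum_mul]
    exact Finset.sum_congr rfl fun i _ => by ring
  simp only [bM, dualE8, Sum.elim_inl, Pi.zero_apply, zero_mul, add_zero, Finset.sum_const_zero,
    Sum.elim_inr, mul_ite, mul_neg, mul_zero, ite_mul, neg_mul, Finset.sum_ite_irrel,
    Finset.sum_neg_distrib, Finset.sum_ite_eq', Finset.mem_univ, if_true, sub_neg_eq_add, zero_add]
  rw [Finset.sum_comm, Finset.sum_congr rfl fun j _ => hcol j, E8GramInv_mul_E8Gram]
  simp [Matrix.one_apply]

theorem exists_bM_eq_apply (j : IdxM) : ∃ z : VM, ∀ m, bM z m = m j := by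
  rcases j with ⟨p, q⟩ | ⟨c, k⟩
  · exact ⟨hypVec p q.rev, fun m => by rw [bM_hypVec, Fin.rev_rev]⟩
  · exact ⟨dualE8 c k, bM_dualE8 c k⟩

def formM : BilinForm ℤ VM :=
  LinearMap.mk₂ ℤ bM bM_add_left bM_smul_left bM_add_right bM_smul_right

@[simp]
theorem formM_apply (x y : VM) : formM x y = bM x y := rfl

theorem formM_isSymm : formM.IsSymm := LinearMap.BilinForm.isSymm_def.mpr bM_comm

theorem sameOrbit_bM_transvection (m f x : VM) (s : ℤ) (hf : bM f f = 0) (hfx : bM f x = 0)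
    (hx : bM x x = 2 * s) : formM.SameOrbit m (m + bM f m • x - (bM x m + s * bM f m) • f) :=
  LinearMap.BilinForm.sameOrbit_eichlerTransvection formM_isSymm hf hfx hx m

def firstPlane : Finset IdxM := {Sum.inl (0, 0), Sum.inl (0, 1)}

theorem exists_isotropic_pairing_eq_coord (m : VM) {j : IdxM} (hj : j ∉ firstPlane)
    (hmj : m j ≠ 0) : ∃ y : VM, bM y y = 0 ∧ (∀ i ∈ firstPlane, y i = 0) ∧
      ∃ j ∉ firstPlane, m j ≠ 0 ∧ bM y m = m j := by
  have hplane : ∀ p : Fin 3, p ≠ 0 → ∀ q, m (Sum.inl (p, q)) ≠ 0 → ∃ y : VM, bM y y = 0 ∧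
      (∀ i ∈ firstPlane, y i = 0) ∧ ∃ j ∉ firstPlane, m j ≠ 0 ∧ bM y m = m j :=
    fun p hp q hq => ⟨hypVec p q.rev, bM_hypVec_self _ _,
      by simp [firstPlane, Pi.single_apply, hp.symm], Sum.inl (p, q), by simp [firstPlane, hp], hq,
      by rw [bM_hypVec, Fin.rev_rev]⟩
  obtain h10 | h10 := ne_or_eq (m (Sum.inl (1, 0))) 0
  · exact hplane 1 one_ne_zero 0 h10
  obtain h11 | h11 := ne_or_eq (m (Sum.inl (1, 1))) 0
  · exact hplane 1 one_ne_zero 1 h11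
  rcases j with ⟨p, q⟩ | ⟨c, k⟩
  · fin_cases p
    · fin_cases q <;> simp [firstPlane] at hj
    · fin_cases q <;> contradiction
    · exact hplane 2 (by decide) q hmj
  -- An `E₈` coordinate: make its dual vector isotropic by adding a vector of the second
  -- hyperbolic plane, on which `m` vanishes.
  obtain ⟨s, hs⟩ := two_dvd_bM_self (dualE8 c k)
  refine ⟨dualE8 c k + (-s) • hypVec 1 0 + hypVec 1 1,
    ?_, ?_, Sum.inr (c, k), by simp [firstPlane], hmj, ?_⟩
  · simp only [bM_add_left, bM_add_right, bM_smul_left, bM_smul_right]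
    simp only [hs, bM_hypVec, bM_hypVec_right, dualE8_inl, Fin.reduceRev, Pi.single_apply,
      Sum.inl.injEq, Prod.mk.injEq, Fin.reduceEq, and_false, if_true, if_false]
    ring
  · simp [firstPlane, dualE8_inl, Pi.single_apply]
  · simp only [bM_add_left, bM_smul_left, bM_dualE8, bM_hypVec]
    simp [h10, h11]

theorem exists_sameOrbit_ne_zero_natAbs_le (m : VM) {j : IdxM} (hj : j ∉ firstPlane)
    (hmj : m j ≠ 0) : ∃ m', formM.SameOrbit m m' ∧ m' (Sum.inl (0, 0)) ≠ 0 ∧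
      ∃ j ∉ firstPlane, m j ≠ 0 ∧ (m' (Sum.inl (0, 0))).natAbs ≤ (m j).natAbs := by
  obtain ⟨y, hyy, hy, j', hj', hmj', hym⟩ := exists_isotropic_pairing_eq_coord m hj hmj
  obtain ⟨t, ht, hle⟩ := Int.exists_sub_mul_ne_zero_natAbs_le (m (Sum.inl (0, 0))) (m j') hmj'
  have hy₀ : y (Sum.inl (0, 0)) = 0 := hy _ (by simp [firstPlane])
  have hy₁ : y (Sum.inl (0, 1)) = 0 := hy _ (by simp [firstPlane])
  have horth : bM (hypVec 0 0) (t • y) = 0 := by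
    rw [bM_hypVec]
    simp [hy₁]
  have hiso : bM (t • y) (t • y) = 2 * 0 := by rw [bM_smul_left, bM_smul_right, hyy]; ring
  obtain ⟨m', hm', hA'⟩ : ∃ m', formM.SameOrbit m m' ∧
      m' (Sum.inl (0, 0)) = m (Sum.inl (0, 0)) - t * m j' :=
    ⟨_, sameOrbit_bM_transvection m _ _ 0 (bM_hypVec_self 0 0) horth hiso,
      by rw [bM_smul_left, hym]; simp [hy₀]⟩
  exact ⟨m', hm', hA' ▸ ht, j', hj', hmj', hA' ▸ hle⟩

theorem exists_sameOrbit_natAbs_lt (m : VM) (hA : m (Sum.inl (0, 0)) ≠ 0) :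
    ∃ m', formM.SameOrbit m m' ∧ m' (Sum.inl (0, 0)) = m (Sum.inl (0, 0)) ∧
      ∀ j ∉ firstPlane, (m' j).natAbs < (m (Sum.inl (0, 0))).natAbs := by
  set A := m (Sum.inl (0, 0))
  -- the transvection along `hypVec 0 1` adds `A • x` to `m`
  set x : VM := fun j => if j ∈ firstPlane then 0 else -(m j / A)
  obtain ⟨s, hs⟩ := two_dvd_bM_self x
  have horth : bM (hypVec 0 1) x = 0 := by
    rw [bM_hypVec]
    simp [x, firstPlane]
  refine ⟨_, sameOrbit_bM_transvection m _ x s (bM_hypVec_self 0 1) horth hs,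
    by simp [x, firstPlane, A], fun j hj => ?_⟩
  have hj₁ : j ≠ Sum.inl (0, 1) := fun h => hj (by simp [h, firstPlane])
  convert Int.natAbs_emod_lt (m j) hA using 2
  rw [bM_hypVec, Int.emod_def]
  simp only [Pi.sub_apply, Pi.add_apply, Pi.smul_apply, smul_eq_mul, x, if_neg hj,
    Pi.single_eq_of_ne hj₁, Fin.reduceRev]
  ring

theorem exists_sameOrbit_supported_firstPlane_of_ne_zero (n : ℕ) : ∀ m : VM,
    (m (Sum.inl (0, 0))).natAbs = n → m (Sum.inl (0, 0)) ≠ 0 →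
      ∃ m', formM.SameOrbit m m' ∧ ∀ j ∉ firstPlane, m' j = 0 := by
  induction n using Nat.strong_induction_on with
  | _ n ih =>
  intro m hn hA
  obtain ⟨m₁, h₁, hA₁, hlt⟩ := exists_sameOrbit_natAbs_lt m hA
  by_cases hsupp : ∀ j ∉ firstPlane, m₁ j = 0
  · exact ⟨m₁, h₁, hsupp⟩
  push Not at hsupp
  obtain ⟨j, hj, hm₁j⟩ := hsupp
  obtain ⟨m₂, h₂, hA₂, j', hj', -, hle⟩ := exists_sameOrbit_ne_zero_natAbs_le m₁ hj hm₁j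
  obtain ⟨m₃, h₃, hsupp₃⟩ := ih _ (by have := hlt j' hj'; omega) m₂ rfl hA₂
  exact ⟨m₃, h₁.trans (h₂.trans h₃), hsupp₃⟩

theorem exists_sameOrbit_supported_firstPlane (m : VM) :
    ∃ m', formM.SameOrbit m m' ∧ ∀ j ∉ firstPlane, m' j = 0 := by
  by_cases hsupp : ∀ j ∉ firstPlane, m j = 0
  · exact ⟨m, .refl m, hsupp⟩
  push Not at hsupp
  obtain ⟨j, hj, hmj⟩ := hsupp
  obtain ⟨m₁, h₁, hA₁, -⟩ := exists_sameOrbit_ne_zero_natAbs_le m hj hmj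
  obtain ⟨m₂, h₂, hsupp₂⟩ := exists_sameOrbit_supported_firstPlane_of_ne_zero _ m₁ rfl hA₁
  exact ⟨m₂, h₁.trans h₂, hsupp₂⟩

theorem bM_self_of_supported_firstPlane (m : VM) (hm : ∀ j ∉ firstPlane, m j = 0) :
    bM m m = 2 * m (Sum.inl (0, 0)) * m (Sum.inl (0, 1)) := by
  have hdecomp : m = m (Sum.inl (0, 0)) • hypVec 0 0 +
      m (Sum.inl (0, 1)) • hypVec 0 1 := by
    funext j
    by_cases hj : j ∈ firstPlane
    · simp only [firstPlane, Finset.mem_insert, Finset.mem_singleton] at hj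
      rcases hj with rfl | rfl <;> simp
    · have h₀ : j ≠ Sum.inl (0, 0) := fun h => hj (by simp [h, firstPlane])
      have h₁ : j ≠ Sum.inl (0, 1) := fun h => hj (by simp [h, firstPlane])
      simp [hm j hj, h₀, h₁]
  nth_rw 1 [hdecomp]
  simp only [bM_add_left, bM_smul_left, bM_hypVec, Fin.reduceRev]
  ring

theorem exists_isotropic_pairing_sq_le_of_supported_firstPlane (m : VM)
    (hm : ∀ j ∉ firstPlane, m j = 0) (hpos : 0 < bM m m) :
    ∃ w : VM, bM w w = 0 ∧ bM w m ≠ 0 ∧ 2 * bM w m ^ 2 ≤ bM m m := by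
  rw [bM_self_of_supported_firstPlane m hm] at hpos ⊢
  have hAB : 0 < m (Sum.inl (0, 0)) * m (Sum.inl (0, 1)) := by linarith
  rcases le_total |m (Sum.inl (0, 1))| |m (Sum.inl (0, 0))| with hle | hle
  · refine ⟨hypVec 0 0, bM_hypVec_self 0 0, ?_, ?_⟩ <;>
      simp only [bM_hypVec, Fin.reduceRev]
    · exact right_ne_zero_of_mul hAB.ne'
    · nlinarith [sq_le_mul_of_abs_le hle hAB]
  · refine ⟨hypVec 0 1, bM_hypVec_self 0 1, ?_, ?_⟩ <;>
      simp only [bM_hypVec, Fin.reduceRev]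
    · exact left_ne_zero_of_mul hAB.ne'
    · nlinarith [sq_le_mul_of_abs_le hle (mul_comm (m (Sum.inl (0, 0))) _ ▸ hAB)]

theorem exists_isotropic_pairing_sq_le (m : VM) (hpos : 0 < bM m m) :
    ∃ w : VM, bM w w = 0 ∧ bM w m ≠ 0 ∧ 2 * bM w m ^ 2 ≤ bM m m := by
  obtain ⟨m', hm', hsupp⟩ := exists_sameOrbit_supported_firstPlane m
  have hself : bM m' m' = bM m m := hm'.apply_self_eq
  obtain ⟨w, hw, hwm, hle⟩ :=
    exists_isotropic_pairing_sq_le_of_supported_firstPlane m' hsupp (hself ▸ hpos)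
  obtain ⟨w', hw', hw'm⟩ := hm'.exists_apply_eq w
  simp only [formM_apply] at hw' hw'm
  exact ⟨w', hw'.trans hw, hw'm ▸ hwm, hw'm ▸ hself ▸ hle⟩

/-! ### The lattice `L = M ⊕ ℤv` -/

abbrev VL := IdxL → ℤ

def vIdx : IdxL := Sum.inr (Sum.inr 0)

def vVec : VL := Pi.single vIdx 1

def proj : VL →ₗ[ℤ] VM := LinearMap.funLeft ℤ ℤ (Sum.map id Sum.inl)

def incl : VM →ₗ[ℤ] VL where
  toFun m := Sum.elim (fun p => m (Sum.inl p)) (Sum.elim (fun q => m (Sum.inr q)) 0)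
  map_add' _ _ := by ext (_ | _ | _) <;> simp
  map_smul' _ _ := by ext (_ | _ | _) <;> simp

theorem bL_eq (x y : VL) : bL x y = bM (proj x) (proj y) - 2 * x vIdx * y vIdx := rfl

@[simp]
theorem proj_incl (m : VM) : proj (incl m) = m := by
  ext (_ | _) <;> rfl

@[simp]
theorem incl_apply_vIdx (m : VM) : incl m vIdx = 0 := rfl

@[simp]
theorem proj_vVec : proj vVec = 0 := by
  ext (_ | _) <;> simp [proj, vVec, vIdx]

@[simp]
theorem vVec_apply_vIdx : vVec vIdx = 1 := Pi.single_eq_same _ _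

theorem incl_injective : Function.Injective incl :=
  Function.LeftInverse.injective proj_incl

theorem incl_proj_add_smul_vVec (x : VL) : incl (proj x) + x vIdx • vVec = x := by
  ext (_ | _ | i)
  · simp [incl, proj, vVec, vIdx]
  · simp [incl, proj, vVec, vIdx]
  · fin_cases i
    simp [incl, vVec, vIdx]

theorem bL_add_left (x y z : VL) : bL (x + y) z = bL x z + bL y z := by
  simp only [bL_eq, map_add, bM_add_left, Pi.add_apply]
  ring

theorem bL_smul_left (c : ℤ) (x y : VL) : bL (c • x) y = c * bL x y := by
  simp only [bL_eq, map_smul, bM_smul_left, Pi.smul_apply, smul_eq_mul]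
  ring

theorem bL_comm (x y : VL) : bL x y = bL y x := by
  rw [bL_eq, bL_eq, bM_comm]
  ring

theorem bL_add_right (x y z : VL) : bL x (y + z) = bL x y + bL x z := by
  rw [bL_comm, bL_add_left, bL_comm y, bL_comm z]

theorem bL_smul_right (c : ℤ) (x y : VL) : bL x (c • y) = c * bL x y := by
  rw [bL_comm, bL_smul_left, bL_comm]

def formL : BilinForm ℤ VL :=
  LinearMap.mk₂ ℤ bL bL_add_left bL_smul_left bL_add_right bL_smul_right

@[simp]
theorem formL_apply (x y : VL) : formL x y = bL x y := rfl

theorem formL_isSymm : formL.IsSymm := LinearMap.BilinForm.isSymm_def.mpr bL_comm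

@[simp]
theorem bL_incl_incl (z w : VM) : bL (incl z) (incl w) = bM z w := by
  simp [bL_eq]

@[simp]
theorem bL_vVec_left (x : VL) : bL vVec x = -2 * x vIdx := by
  simp [bL_eq]

@[simp]
theorem bL_vVec_right (x : VL) : bL x vVec = -2 * x vIdx := by
  rw [bL_comm, bL_vVec_left]

theorem bL_two_smul_incl_add_self (m : VM) (c : ℤ) :
    bL (2 • incl m + c • vVec) (2 • incl m + c • vVec) = 4 * bM m m - 2 * c ^ 2 := by
  simp only [bL_add_left, bL_add_right, two_nsmul, bL_smul_left, bL_smul_right, bL_incl_incl,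
    bL_vVec_left, bL_vVec_right, incl_apply_vIdx, vVec_apply_vIdx, Pi.add_apply, Pi.smul_apply,
    smul_eq_mul]
  ring

theorem exists_eq_two_smul_incl_add (e : VL) (he : ∀ x, 2 ∣ bL e x) :
    ∃ m : VM, e = 2 • incl m + e vIdx • vVec := by
  have heven : ∀ j, 2 ∣ proj e j := fun j => by
    obtain ⟨z, hz⟩ := exists_bM_eq_apply j
    simpa [bL_eq, bM_comm _ z, hz] using he (incl z)
  refine ⟨fun j => proj e j / 2, ?_⟩
  have htwo : 2 • (fun j => proj e j / 2) = proj e :=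
    funext fun j => by simpa [two_mul] using Int.mul_ediv_cancel' (heven j)
  rw [← map_nsmul, htwo, incl_proj_add_smul_vVec]

theorem sameOrbit_two_smul_incl_add (m w : VM) (c t : ℤ) (hw : bM w w = 0) :
    formL.SameOrbit (2 • incl m + c • vVec)
      (2 • incl (m + (t * c + t ^ 2 * bM w m) • w) + (c + 2 * t * bM w m) • vVec) := by
  have hf : formL (incl w) (incl w) = 0 := by simpa using hw
  have hfx : formL (incl w) (t • vVec) = 0 := by
    rw [formL_apply, bL_smul_right, bL_vVec_right, incl_apply_vIdx, mul_zero, mul_zero]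
  have hx : formL (t • vVec) (t • vVec) = 2 * -t ^ 2 := by
    rw [formL_apply, bL_smul_left, bL_smul_right, bL_vVec_left, vVec_apply_vIdx]; ring
  convert LinearMap.BilinForm.sameOrbit_eichlerTransvection formL_isSymm hf hfx hx
    (2 • incl m + c • vVec) using 1
  rw [LinearMap.BilinForm.eichlerTransvection_apply]
  simp only [formL_apply]
  simp only [bL_add_right, two_nsmul, bL_smul_left, bL_smul_right, bL_incl_incl,
    bL_vVec_left, bL_vVec_right, incl_apply_vIdx, Pi.smul_apply, smul_eq_mul, vVec_apply_vIdx,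
    map_add, map_smul]
  module

theorem sameOrbit_vVec_of_natAbs_le_one (m : VM) (c : ℤ) (h : 2 * bM m m = c ^ 2 - 1)
    (hc : c.natAbs ≤ 1) : formL.SameOrbit (2 • incl m + c • vVec) vVec := by
  -- `c = ±1`, so `m` is isotropic and the transvection along `m` itself removes it
  obtain rfl | rfl | rfl : c = 0 ∨ c = 1 ∨ c = -1 := by omega
  · norm_num at h
    omega
  · have hm : bM m m = 0 := by linarith
    simpa [hm] using sameOrbit_two_smul_incl_add m m 1 (-1) hm
  · have hm : bM m m = 0 := by linarith
    simpa [hm] using (sameOrbit_two_smul_incl_add m m (-1) 1 hm).trans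
      (LinearMap.BilinForm.sameOrbit_neg _)

theorem exists_sameOrbit_natAbs_lt_of_two_le (m : VM) (c : ℤ) (h : 2 * bM m m = c ^ 2 - 1)
    (hc : 2 ≤ c.natAbs) : ∃ (m' : VM) (c' : ℤ),
      formL.SameOrbit (2 • incl m + c • vVec) (2 • incl m' + c' • vVec) ∧
        2 * bM m' m' = c' ^ 2 - 1 ∧ c'.natAbs < c.natAbs := by
  have hc2 : 2 ^ 2 ≤ c ^ 2 := Int.natAbs_le_iff_sq_le.mp hc
  obtain ⟨w, hw, hwm, hle⟩ := exists_isotropic_pairing_sq_le m (by nlinarith)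
  obtain ⟨t, ht⟩ := Int.exists_two_mul_natAbs_add_mul_le c (2 * bM w m) (by positivity)
  have horb := sameOrbit_two_smul_incl_add m w c t hw
  have hself := horb.apply_self_eq
  simp only [formL_apply, bL_two_smul_incl_add_self] at hself
  refine ⟨_, _, horb, by linarith, ?_⟩
  have hβ : (c + 2 * t * bM w m).natAbs ≤ (bM w m).natAbs := by
    simp only [show c + t * (2 * bM w m) = c + 2 * t * bM w m by ring, Int.natAbs_mul,
      Int.reduceAbs] at ht
    omega
  rw [Int.natAbs_le_iff_sq_le] at hβ
  rw [Int.natAbs_lt_iff_sq_lt]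
  nlinarith

theorem sameOrbit_vVec (m : VM) (c : ℤ) (h : 2 * bM m m = c ^ 2 - 1) :
    formL.SameOrbit (2 • incl m + c • vVec) vVec := by
  induction hn : c.natAbs using Nat.strong_induction_on generalizing m c with
  | _ n ih =>
  subst hn
  by_cases hc : c.natAbs ≤ 1
  · exact sameOrbit_vVec_of_natAbs_le_one m c h hc
  obtain ⟨m', c', horb, h', hlt⟩ := exists_sameOrbit_natAbs_lt_of_two_le m c h (by omega)
  exact horb.trans (ih _ hlt m' c' h' rfl)

theorem sameOrbit_vVec_of_two_dvd (e : VL) (he2 : bL e e = -2) (hdiv : ∀ x, 2 ∣ bL e x) :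
    formL.SameOrbit e vVec := by
  obtain ⟨m, hm⟩ := exists_eq_two_smul_incl_add e hdiv
  rw [hm, bL_two_smul_incl_add_self] at he2
  rw [hm]
  exact sameOrbit_vVec m _ (by linarith)

theorem exists_isometry_orthogonal_of_sameOrbit (e : VL) (h : formL.SameOrbit vVec e) :
    ∃ f : VM →ₗ[ℤ] VL, Function.Injective f ∧ (∀ z, bL e (f z) = 0) ∧
      (∀ z w, bL (f z) (f w) = bM z w) ∧ ∀ y, bL e y = 0 → ∃ z, f z = y := by
  obtain ⟨g, hg, rfl⟩ := h
  simp only [formL_apply] at hg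
  refine ⟨g.toLinearMap ∘ₗ incl, g.injective.comp incl_injective, fun z => ?_, fun z w => ?_,
    fun y hy => ⟨proj (g.symm y), ?_⟩⟩
  · simp [hg]
  · simp [hg]
  · have hv : g.symm y vIdx = 0 := by
      have := hg vVec (g.symm y)
      simp_all
    simpa [hv] using congrArg g (incl_proj_add_smul_vVec (g.symm y))

/-- In `L = U³ ⊕ E₈(-1)² ⊕ (-2)`, there is exactly one `O(L)`-orbit of vectors
`e` with `e² = -2` and divisibility `2` (i.e. `(e, L) = 2ℤ`): any two such are
exchanged by an isometry of `L`. Moreover for such `e` one has `e ⊕ e^⊥ = L`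
(every vector of `L` is `c·e + y` with `y ⟂ e`), and `e^⊥ ≅ U³ ⊕ E₈(-1)²`. -/
theorem stmt_17 (e : IdxL → ℤ)
    (he2 : bL e e = -2)
    (hdiv : (∀ x : IdxL → ℤ, (2 : ℤ) ∣ bL e x) ∧ ∃ x : IdxL → ℤ, bL e x = 2) :
    (∀ e' : IdxL → ℤ, bL e' e' = -2 →
      ((∀ x : IdxL → ℤ, (2 : ℤ) ∣ bL e' x) ∧ ∃ x : IdxL → ℤ, bL e' x = 2) →
      ∃ g : (IdxL → ℤ) ≃ₗ[ℤ] (IdxL → ℤ),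
        (∀ x y : IdxL → ℤ, bL (g x) (g y) = bL x y) ∧ g e = e') ∧
    (∀ x : IdxL → ℤ, ∃ (c : ℤ) (y : IdxL → ℤ), bL e y = 0 ∧ x = c • e + y) ∧
    (∃ f : (IdxM → ℤ) →ₗ[ℤ] (IdxL → ℤ),
      Function.Injective f ∧
      (∀ z : IdxM → ℤ, bL e (f z) = 0) ∧
      (∀ z w : IdxM → ℤ, bL (f z) (f w) = bM z w) ∧
      (∀ y : IdxL → ℤ, bL e y = 0 → ∃ z : IdxM → ℤ, f z = y)) := by
  have he := sameOrbit_vVec_of_two_dvd e he2 hdiv.1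
  refine ⟨fun e' he2' hdiv' => he.trans (sameOrbit_vVec_of_two_dvd e' he2' hdiv'.1).symm,
    fun x => ?_, exists_isometry_orthogonal_of_sameOrbit e he.symm⟩
  obtain ⟨k, hk⟩ := hdiv.1 x
  refine ⟨-k, x + k • e, ?_, by module⟩
  rw [bL_add_right, bL_smul_right, hk, he2]
  ring
end
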